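/- arXiv:2208.13281 — 4 statements merged into one kernel-verified Lean document; each statement's English description precedes it below -/
import Mathlib

section
/- Let D be a Noetherian integral domain, let R be a commutative D-algebra, and let 𝔪 be a maximal ideal of R such that the field R/𝔪 is finitely generated as a D-algebra. If the preimage of 𝔪 in D under the structure map is the zero ideal, then D is a Goldman domain. -/
/-- An integral domain `D` is a *Goldman domain* if its fraction field is a
finitely generated `D`-algebra. -/
def IsGoldmanDomain (D : Type*) [CommRing D] [IsDomain D] : Prop :=
  Algebra.FiniteType D (FractionRing D)

/-- Let `D` be a Noetherian integral domain, `R` a commutative `D`-algebra, and `𝔪` a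
maximal ideal of `R` such that the field `R ⧸ 𝔪` is finitely generated as a `D`-algebra.
If the preimage of `𝔪` in `D` under the structure map is the zero ideal, then `D` is a
Goldman domain. -/
theorem goldman_of_comap_eq_bot
    (D : Type*) [CommRing D] [IsDomain D] [IsNoetherianRing D]
    (R : Type*) [CommRing R] [Algebra D R]
    (𝔪 : Ideal R) [𝔪.IsMaximal]
    (hfg : Algebra.FiniteType D (R ⧸ 𝔪))
    (h0 : Ideal.comap (algebraMap D R) 𝔪 = ⊥) :
    IsGoldmanDomain D := by
  letI K := R ⧸ 𝔪
  letI : Field K := Ideal.Quotient.field 𝔪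
  have hinj : Function.Injective (algebraMap D K) := by
    rw [injective_iff_map_eq_zero]
    intro a ha
    have h1 : algebraMap D K a = Ideal.Quotient.mk 𝔪 (algebraMap D R a) := rfl
    have : a ∈ Ideal.comap (algebraMap D R) 𝔪 := by
      rw [Ideal.mem_comap, ← Ideal.Quotient.eq_zero_iff_mem, ← h1, ha]
    rw [h0] at this
    simpa using this
  letI F := FractionRing D
  letI : Algebra F K := (IsFractionRing.lift (A := D) (K := F) hinj).toAlgebra
  haveI : IsScalarTower D F K := IsScalarTower.of_algebraMap_eq fun a => by
    rw [RingHom.algebraMap_toAlgebra, IsFractionRing.lift_algebraMap]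
  haveI hFK : Algebra.FiniteType F K :=
    Algebra.FiniteType.of_restrictScalars_finiteType (R := D) (S := F) (A := K)
  haveI : Module.Finite F K := finite_of_finite_type_of_isJacobsonRing F K
  have hAC : (⊤ : Subalgebra D K).FG := hfg.1
  have hBC : (⊤ : Submodule F K).FG := Module.Finite.fg_top
  have hBCi : Function.Injective (algebraMap F K) := (algebraMap F K).injective
  exact ⟨fg_of_fg_of_fg D F K hAC hBC hBCi⟩
end

section
/- Let D be a residually finite Dedekind domain that is not a Goldman domain, let R be a commutative D-algebra, and let 𝔪 be a maximal ideal of R. If the field R/𝔪 is finitely generated as a D-algebra, then R/𝔪 is a finite field. -/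
theorem IsGoldmanDomain.of_isField_away {D : Type*} [CommRing D] [IsDomain D] {a : D}
    (ha : a ≠ 0) (hfield : IsField (Localization.Away a)) : IsGoldmanDomain D := by
  let := hfield.toField
  have : FaithfulSMul D (Localization.Away a) :=
    (faithfulSMul_iff_algebraMap_injective _ _).mpr <|
      IsLocalization.injective _ (powers_le_nonZeroDivisors_of_noZeroDivisors ha)
  have : IsFractionRing D (Localization.Away a) := IsFractionRing.of_field D _ fun z => by
    obtain ⟨⟨x, s⟩, rfl⟩ := IsLocalization.mk'_surjective (Submonoid.powers a) z
    refine ⟨x, s, ?_⟩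
    rw [eq_div_iff (IsLocalization.map_units _ s).ne_zero, IsLocalization.mk'_spec]
  exact (inferInstance : Algebra.FiniteType D (Localization.Away a)).equiv
    (IsLocalization.algEquiv (nonZeroDivisors D) _ (FractionRing D))

theorem isField_away_of_forall_isMaximal_mem {D : Type*} [CommRing D] [IsDomain D]
    [Ring.DimensionLEOne D] {a : D} (ha : a ≠ 0) (hmem : ∀ M : Ideal D, M.IsMaximal → a ∈ M) :
    IsField (Localization.Away a) := by
  have := IsLocalization.Away.isDomain (S := Localization.Away a) ha
  by_contra hnf
  obtain ⟨P, hP, hPmax⟩ := Ring.exists_maximal_of_not_isField hnf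
  let p := P.comap (algebraMap D (Localization.Away a))
  have hp : p ≠ ⊥ := fun h => hP <| by
    rw [← IsLocalization.map_under (Submonoid.powers a) _ P]
    exact (congrArg _ h).trans (Ideal.map_bot)
  have hpmax : p.IsMaximal := (hPmax.isPrime.comap _).isMaximal hp
  exact hPmax.ne_top <| P.eq_top_of_isUnit_mem (hmem p hpmax)
    (IsLocalization.Away.algebraMap_isUnit a)

theorem isJacobsonRing_of_not_isGoldmanDomain {D : Type*} [CommRing D] [IsDomain D]
    [Ring.DimensionLEOne D] (h : ¬ IsGoldmanDomain D) : IsJacobsonRing D := by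
  refine isJacobsonRing_iff_prime_eq.mpr fun P hP => ?_
  rcases eq_or_ne P ⊥ with rfl | hne
  · by_contra hjac
    obtain ⟨a, haj, ha⟩ := Submodule.exists_mem_ne_zero_of_ne_bot hjac
    exact h <| .of_isField_away ha <| isField_away_of_forall_isMaximal_mem ha
      fun M hM => Ideal.mem_sInf.mp haj ⟨bot_le, hM⟩
  · have := hP.isMaximal hne
    exact Ideal.jacobson_eq_self_of_isMaximal

theorem finite_of_moduleFinite_of_finite_quotient_isMaximal {D K : Type*} [CommRing D] [Field K] [Algebra D K]
    [Module.Finite D K] (hres : ∀ I : Ideal D, I.IsMaximal → Finite (D ⧸ I)) : Finite K := by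
  let p := RingHom.ker (algebraMap D K)
  have := hres p (Algebra.ker_algebraMap_isMaximal_of_isIntegral D K)
  let : Algebra (D ⧸ p) K := (RingHom.kerLift (algebraMap D K)).toAlgebra
  have : IsScalarTower D (D ⧸ p) K :=
    .of_algebraMap_eq fun x => (RingHom.kerLift_mk (algebraMap D K) x).symm
  have : Module.Finite (D ⧸ p) K := .of_restrictScalars_finite D (D ⧸ p) K
  exact Module.finite_of_finite (D ⧸ p)

theorem finite_residue_field_of_finiteType_general
    (D : Type*) [CommRing D] [IsDedekindDomain D]
    (hres : ∀ I : Ideal D, I.IsMaximal → Finite (D ⧸ I))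
    (hng : ¬ IsGoldmanDomain D)
    (R : Type*) [CommRing R] [Algebra D R]
    (𝔪 : Ideal R) [𝔪.IsMaximal]
    (hfg : Algebra.FiniteType D (R ⧸ 𝔪)) :
    IsField (R ⧸ 𝔪) ∧ Finite (R ⧸ 𝔪) := by
  have : IsJacobsonRing D := isJacobsonRing_of_not_isGoldmanDomain hng
  let := Ideal.Quotient.field 𝔪
  have : Module.Finite D (R ⧸ 𝔪) := finite_of_finite_type_of_isJacobsonRing D (R ⧸ 𝔪)
  exact ⟨Field.toIsField _, finite_of_moduleFinite_of_finite_quotient_isMaximal hres⟩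

/-- Let `D` be a residually finite Dedekind domain that is not a Goldman domain, let `R`
be a commutative `D`-algebra, and let `𝔪` be a maximal ideal of `R`.  If the field
`R ⧸ 𝔪` is finitely generated as a `D`-algebra, then `R ⧸ 𝔪` is a finite field. -/
theorem finite_residue_field_of_finiteType
    (D : Type*) [CommRing D] [IsDomain D] [IsDedekindDomain D]
    (hres : ∀ I : Ideal D, I.IsMaximal → Finite (D ⧸ I))
    (hng : ¬ IsGoldmanDomain D)
    (R : Type*) [CommRing R] [Algebra D R]
    (𝔪 : Ideal R) [𝔪.IsMaximal]
    (hfg : Algebra.FiniteType D (R ⧸ 𝔪)) :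
    IsField (R ⧸ 𝔪) ∧ Finite (R ⧸ 𝔪) :=
  finite_residue_field_of_finiteType_general D hres hng R 𝔪 hfg
end

section
/- Let k be a field and let φ ∈ k(X) be a rational function whose derivative φ′(X) is not identically zero. Then for every integer n ≥ 0, the rational function φ^n(X) − t is separable over the field k(t); equivalently, writing the n-fold compositional iterate φ^n = f_n/g_n with f_n, g_n ∈ k[X] coprime, the polynomial f_n(X) − t·g_n(X) ∈ k(t)[X] is a separable polynomial. -/
/-!
The derivation `d/dX` of `K[X]` extends to `K(X)`, and for nonconstant (hence transcendental) `ψ`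
the substitution `u ↦ u ∘ ψ` is the `K`-embedding `K(X) → K(X)` sending `X` to `ψ`; this gives the
chain rule `(φ ∘ ψ)' = φ'(ψ) ψ'`, so every iterate `φ^n` has a nonzero derivative.
For nonconstant `ψ = f / g`, the polynomial `f - t g` is irreducible over `K(t)`: under `t ↦ ψ` it
becomes the minimal polynomial of `X` over `K(ψ)`. It is therefore separable as soon as its
derivative `f' - t g'` is nonzero, that is, as soon as `f'` and `g'` do not both vanish, which
`ψ' ≠ 0` guarantees.
-/

/-- Composition of rational functions: `(rcomp φ ψ) = φ ∘ ψ = f(ψ) / g(ψ)` where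
`φ = f / g` in lowest terms. -/
noncomputable def rcomp {K : Type*} [Field K] (φ ψ : RatFunc K) : RatFunc K :=
  Polynomial.eval₂ (algebraMap K (RatFunc K)) ψ φ.num /
    Polynomial.eval₂ (algebraMap K (RatFunc K)) ψ φ.denom

/-- The `n`-fold compositional iterate `φ^n` of a rational function, with `φ^0 = X`. -/
noncomputable def riter {K : Type*} [Field K] (φ : RatFunc K) : ℕ → RatFunc K
  | 0 => RatFunc.X
  | n + 1 => rcomp φ (riter φ n)

/-- For `ψ = f / g ∈ K(X)` in lowest terms, the numerator `f(X) - t • g(X)` of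
`ψ(X) - t` as a polynomial in `X` over `K(t)`; here `K(t)` is realized as `RatFunc K`
(with variable `t = RatFunc.X`). -/
noncomputable def numeratorAtT {K : Type*} [Field K] (ψ : RatFunc K) :
    Polynomial (RatFunc K) :=
  ψ.num.map (algebraMap K (RatFunc K)) -
    Polynomial.C RatFunc.X * ψ.denom.map (algebraMap K (RatFunc K))

open Polynomial IntermediateField
open scoped IntermediateField.algebraAdjoinAdjoin

namespace RatFunc

variable {K : Type*} [Field K]

noncomputable def derivationFun (x : RatFunc K) : RatFunc K :=
  x.liftOn' (fun p q => RatFunc.mk (derivative p * q - p * derivative q) (q ^ 2))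
    fun {p q a} hq ha => by
      rw [mk_eq_mk (pow_ne_zero 2 (mul_ne_zero ha hq)) (pow_ne_zero 2 hq), derivative_mul,
        derivative_mul]
      ring

theorem derivationFun_div (p q : K[X]) :
    derivationFun (algebraMap K[X] (RatFunc K) p / algebraMap K[X] (RatFunc K) q) =
      algebraMap K[X] (RatFunc K) (derivative p * q - p * derivative q) /
        algebraMap K[X] (RatFunc K) (q ^ 2) := by
  rw [derivationFun, liftOn'_div, mk_eq_div]
  intro p
  simp [mk_eq_div]

theorem derivationFun_algebraMap (p : K[X]) :
    derivationFun (algebraMap K[X] (RatFunc K) p) = algebraMap K[X] (RatFunc K) (derivative p) := by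
  simpa using derivationFun_div p 1

theorem derivationFun_add (x y : RatFunc K) :
    derivationFun (x + y) = derivationFun x + derivationFun y := by
  induction x using RatFunc.induction_on with | _ p q hq =>
  induction y using RatFunc.induction_on with | _ r s hs =>
  have hq' := algebraMap_ne_zero hq
  have hs' := algebraMap_ne_zero hs
  rw [div_add_div _ _ hq' hs', ← map_mul, ← map_mul, ← map_mul, ← map_add,
    derivationFun_div, derivationFun_div, derivationFun_div]
  simp only [derivative_mul, map_sub, map_add, map_mul, map_pow]
  field_simp
  ring

theorem derivationFun_mul (x y : RatFunc K) :
    derivationFun (x * y) = x * derivationFun y + y * derivationFun x := by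
  induction x using RatFunc.induction_on with | _ p q hq =>
  induction y using RatFunc.induction_on with | _ r s hs =>
  have hq' := algebraMap_ne_zero hq
  have hs' := algebraMap_ne_zero hs
  rw [div_mul_div_comm, ← map_mul, ← map_mul, derivationFun_div, derivationFun_div,
    derivationFun_div]
  simp only [derivative_mul, map_sub, map_add, map_mul, map_pow]
  field_simp
  ring

variable (K) in
noncomputable def derivation : Derivation K (RatFunc K) (RatFunc K) where
  toFun := derivationFun
  map_add' := derivationFun_add
  map_smul' c x := by
    rw [Algebra.smul_def, derivationFun_mul, IsScalarTower.algebraMap_apply K K[X],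
      derivationFun_algebraMap]
    simp [Algebra.smul_def]
  map_one_eq_zero' := by
    simpa using derivationFun_algebraMap (K := K) 1
  leibniz' x y := by
    simp only [smul_eq_mul]
    exact derivationFun_mul x y

theorem derivation_algebraMap (p : K[X]) :
    derivation K (algebraMap K[X] (RatFunc K) p) = algebraMap K[X] (RatFunc K) (derivative p) :=
  derivationFun_algebraMap p

theorem derivation_X : derivation K (X : RatFunc K) = 1 := by
  rw [← algebraMap_X, derivation_algebraMap, derivative_X, map_one]

theorem derivation_C (c : K) : derivation K (C c) = 0 := by
  rw [← algebraMap_eq_C, Derivation.map_algebraMap]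

theorem not_exists_eq_C_of_derivation_ne_zero {ψ : RatFunc K} (h : derivation K ψ ≠ 0) :
    ¬∃ c, ψ = C c :=
  fun ⟨c, hc⟩ => h (hc ▸ derivation_C c)

theorem derivation_eq_zero_iff (x : RatFunc K) :
    derivation K x = 0 ↔ derivative x.num * x.denom - x.num * derivative x.denom = 0 := by
  have hinj := IsFractionRing.injective K[X] (RatFunc K)
  conv_lhs => rw [← num_div_denom x]
  rw [Derivation.leibniz_div, derivation_algebraMap, derivation_algebraMap, smul_eq_zero]
  simp only [smul_eq_mul, ← map_mul, ← map_sub, map_eq_zero_iff _ hinj]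
  rw [or_iff_right (by simp [x.denom_ne_zero]), mul_comm]

theorem _root_.Derivation.map_algEquivOfTranscendental {K L : Type*} [Field K] [Field L]
    [Algebra K L] (D : Derivation K L L) {f : L} (hf : Transcendental K f) (u : RatFunc K) :
    D (algEquivOfTranscendental f hf u) =
      algEquivOfTranscendental f hf (derivation K u) * D f := by
  induction u using RatFunc.induction_on with | _ p q _ =>
  rw [Derivation.leibniz_div, derivation_algebraMap, derivation_algebraMap]
  simp only [smul_eq_mul, map_div₀, map_inv₀, map_sub, map_mul, map_pow,
    algEquivOfTranscendental_algebraMap]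
  push_cast [AdjoinSimple.coe_aeval_gen_apply]
  rw [Derivation.leibniz_div, Derivation.map_aeval, Derivation.map_aeval]
  simp only [smul_eq_mul]
  ring

theorem rcomp_eq_algEquivOfTranscendental (φ : RatFunc K) {ψ : RatFunc K}
    (hψ : Transcendental K ψ) :
    rcomp φ ψ = algEquivOfTranscendental ψ hψ φ := by
  rw [RatFunc.algEquivOfTranscendental_apply, rcomp, aeval_def, aeval_def]

theorem derivation_rcomp_ne_zero {φ ψ : RatFunc K} (hφ : derivation K φ ≠ 0)
    (hψ : derivation K ψ ≠ 0) :
    derivation K (rcomp φ ψ) ≠ 0 := by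
  have hψ' := ψ.transcendental_of_ne_C (not_exists_eq_C_of_derivation_ne_zero hψ)
  rw [rcomp_eq_algEquivOfTranscendental φ hψ', Derivation.map_algEquivOfTranscendental]
  exact mul_ne_zero (by simpa using hφ) hψ

theorem derivation_riter_ne_zero {φ : RatFunc K} (hφ : derivation K φ ≠ 0) :
    ∀ n, derivation K (riter φ n) ≠ 0
  | 0 => by simp [riter, derivation_X]
  | n + 1 => derivation_rcomp_ne_zero hφ (derivation_riter_ne_zero hφ n)

theorem numeratorAtT_map_algEquivOfTranscendental {ψ : RatFunc K} (hψ : Transcendental K ψ) :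
    (numeratorAtT ψ).map (algEquivOfTranscendental ψ hψ : RatFunc K →+* K⟮ψ⟯) =
      ψ.minpolyX K⟮ψ⟯ := by
  have hK : (algEquivOfTranscendental ψ hψ : RatFunc K →+* K⟮ψ⟯).comp
      (algebraMap K (RatFunc K)) = algebraMap K K⟮ψ⟯ :=
    (algEquivOfTranscendental ψ hψ).toAlgHom.comp_algebraMap
  have hX : algEquivOfTranscendental ψ hψ X = AdjoinSimple.gen K ψ :=
    Subtype.ext (algEquivOfTranscendental_X ψ hψ)
  simp only [numeratorAtT, minpolyX, Polynomial.map_sub, Polynomial.map_mul, Polynomial.map_map,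
    map_C, hK, RingHom.coe_coe, hX, algebraAdjoinAdjoin.algebraMap_eq_gen_self]

theorem irreducible_numeratorAtT {ψ : RatFunc K} (hψ : ¬∃ c, ψ = C c) :
    Irreducible (numeratorAtT ψ) := by
  have h := ψ.irreducible_minpolyX hψ
  rw [← numeratorAtT_map_algEquivOfTranscendental (ψ.transcendental_of_ne_C hψ)] at h
  exact (MulEquiv.irreducible_iff (mapEquiv (algEquivOfTranscendental ψ _).toRingEquiv)).mp h

theorem eq_zero_of_map_sub_C_X_mul_map_eq_zero {a b : K[X]}
    (h : a.map (algebraMap K (RatFunc K)) - Polynomial.C X * b.map (algebraMap K (RatFunc K)) = 0) :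
    b = 0 := by
  ext i
  have hi := congrArg (coeff · i) h
  simp only [coeff_sub, Polynomial.coeff_C_mul, coeff_map, coeff_zero] at hi
  simp only [IsScalarTower.algebraMap_apply K K[X] (RatFunc K), ← algebraMap_X, ← map_mul,
    ← map_sub, map_eq_zero_iff _ (IsFractionRing.injective K[X] (RatFunc K))] at hi
  simpa using congrArg (coeff · 1) hi

theorem separable_numeratorAtT {ψ : RatFunc K} (h : derivation K ψ ≠ 0) :
    (numeratorAtT ψ).Separable := by
  rw [separable_iff_derivative_ne_zero
    (irreducible_numeratorAtT (not_exists_eq_C_of_derivation_ne_zero h))]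
  intro h0
  rw [numeratorAtT, derivative_sub, derivative_C_mul, derivative_map, derivative_map] at h0
  have hd := eq_zero_of_map_sub_C_X_mul_map_eq_zero h0
  rw [hd, Polynomial.map_zero, mul_zero, sub_zero, Polynomial.map_eq_zero] at h0
  exact h ((derivation_eq_zero_iff ψ).mpr (by rw [h0, hd]; ring))

end RatFunc

/-- Let `k` be a field and `φ ∈ k(X)` with `φ′ ≠ 0` (equivalently
`num′ ⬝ denom - num ⬝ denom′ ≠ 0`).  Then for every `n ≥ 0`, writing the `n`-th
compositional iterate as `φ^n = f_n / g_n` in lowest terms, the polynomial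
`f_n(X) - t ⬝ g_n(X) ∈ k(t)[X]` is separable; i.e. `φ^n(X) - t` is separable
over `k(t)`. -/
theorem iterate_sub_t_separable
    (k : Type*) [Field k] (φ : RatFunc k)
    (hder : Polynomial.derivative φ.num * φ.denom
        - φ.num * Polynomial.derivative φ.denom ≠ 0) :
    ∀ n : ℕ, (numeratorAtT (riter φ n)).Separable := by
  have hφ : RatFunc.derivation k φ ≠ 0 := (RatFunc.derivation_eq_zero_iff φ).not.mpr hder
  exact fun n => RatFunc.separable_numeratorAtT (RatFunc.derivation_riter_ne_zero hφ n)
end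

section
/- Let q be a prime power and let j ≥ 1 and m ≥ 1 be integers. Then the number of tuples (a_1, …, a_m) ∈ (F_{q^j})^m such that the subfield F_q(a_1, …, a_m) of F_{q^j} generated over F_q by a_1, …, a_m is a proper subfield of F_{q^j} is at most 2^m · q^{jm/2}. -/
/-!
Every entry of a tuple whose generated subfield is proper lies in some proper subfield of `F`,
so it suffices to count the union of the proper subfields. If `|F| = p ^ d` and `K` is a proper
subfield, then `F` has degree at least `2` over `K`, hence `|K| = p ^ e` with `1 ≤ e ≤ d / 2`, and
its elements are roots of `X ^ p ^ e - X`. The union therefore has at most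
`∑_{e ≤ d/2} p ^ e ≤ 2 p ^ (d / 2) ≤ 2 √|F|` elements, and the tuples at most `(2 √|F|) ^ m`.
-/

open Polynomial in
theorem ncard_setOf_pow_eq_self_le {R : Type*} [CommRing R] [IsDomain R] {N : ℕ} (hN : 1 < N) :
    {x : R | x ^ N = x}.ncard ≤ N := by
  have hdeg : (X ^ N - X : R[X]).natDegree = N := by
    rw [natDegree_sub_eq_left_of_natDegree_lt] <;> simp [hN]
  have hne : (X ^ N - X : R[X]) ≠ 0 := by
    intro h
    rw [h, natDegree_zero] at hdeg
    omega
  calc {x : R | x ^ N = x}.ncard = ((X ^ N - X : R[X]).rootSet R).ncard := by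
        congr 1
        ext x
        simp [mem_rootSet_of_ne hne, sub_eq_zero]
    _ ≤ N := (ncard_rootSet_le _ _).trans hdeg.le

theorem Nat.sum_Icc_one_pow_le_two_mul_pow {p : ℕ} (hp : 2 ≤ p) (t : ℕ) :
    ∑ e ∈ Finset.Icc 1 t, p ^ e ≤ 2 * p ^ t := by
  induction t with
  | zero => simp
  | succ t ih =>
    rw [Finset.sum_Icc_succ_top (by omega), pow_succ]
    nlinarith [Nat.mul_le_mul_left (p ^ t) hp]

theorem Set.ncard_univ_pi_const {ι α : Type*} [Fintype ι] (s : Set α) :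
    (Set.univ.pi fun _ : ι ↦ s).ncard = s.ncard ^ Fintype.card ι := by
  rw [← Nat.card_coe_set_eq, Nat.card_congr (Equiv.Set.univPi _), Nat.card_pi,
    Finset.prod_const, Nat.card_coe_set_eq, Finset.card_univ]

namespace FiniteField

variable {F : Type*} [Field F] [Finite F]

theorem card_sq_le_card_of_ne_top {K : Subfield F} (hK : K ≠ ⊤) :
    Nat.card K ^ 2 ≤ Nat.card F := by
  have hcard : Nat.card F = Nat.card K ^ Module.finrank K F := Module.natCard_eq_pow_finrank
  obtain ⟨x, hx⟩ : ∃ x, x ∉ K := by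
    by_contra! h
    exact hK (eq_top_iff.mpr fun x _ ↦ h x)
  have hlt : Nat.card K < Nat.card F := Finite.card_subtype_lt hx
  have hK1 : 1 < Nat.card K := Finite.one_lt_card
  rw [hcard] at hlt ⊢
  exact Nat.pow_le_pow_right (by omega) ((Nat.pow_lt_pow_iff_right hK1).mp (by rwa [pow_one]))

theorem exists_card_eq_pow_of_ne_top {p d : ℕ} (hp : p.Prime) (hF : Nat.card F = p ^ d)
    {K : Subfield F} (hK : K ≠ ⊤) : ∃ e ∈ Finset.Icc 1 (d / 2), Nat.card K = p ^ e := by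
  obtain ⟨e, -, he⟩ : ∃ e ≤ d, Nat.card K = p ^ e := (Nat.dvd_prime_pow hp).mp
    (hF ▸ AddSubgroup.card_addSubgroup_dvd_card K.toAddSubgroup)
  have hK1 : 1 < Nat.card K := Finite.one_lt_card
  have hsq : p ^ (2 * e) ≤ p ^ d := by
    rw [pow_mul', ← he, ← hF]
    exact card_sq_le_card_of_ne_top hK
  have h2e := (Nat.pow_le_pow_iff_right hp.one_lt).mp hsq
  have he0 : e ≠ 0 := by
    rintro rfl
    rw [he, pow_zero] at hK1
    exact hK1.false
  exact ⟨e, Finset.mem_Icc.mpr ⟨by omega, by omega⟩, he⟩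

theorem ncard_setOf_exists_ne_top_mem_le {p d : ℕ} (hp : p.Prime) (hF : Nat.card F = p ^ d) :
    {x : F | ∃ K : Subfield F, K ≠ ⊤ ∧ x ∈ K}.ncard ≤ 2 * p ^ (d / 2) := by
  have hsub : {x : F | ∃ K : Subfield F, K ≠ ⊤ ∧ x ∈ K} ⊆
      ⋃ e ∈ Finset.Icc 1 (d / 2), {x : F | x ^ p ^ e = x} := by
    rintro x ⟨K, hK, hx⟩
    obtain ⟨e, he, hcard⟩ := exists_card_eq_pow_of_ne_top hp hF hK
    have : Fintype K := Fintype.ofFinite K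
    have hpow := pow_card (⟨x, hx⟩ : K)
    rw [← Nat.card_eq_fintype_card, hcard] at hpow
    exact Set.mem_biUnion he (congrArg Subtype.val hpow)
  calc _ ≤ (⋃ e ∈ Finset.Icc 1 (d / 2), {x : F | x ^ p ^ e = x}).ncard :=
        Set.ncard_le_ncard hsub (Set.toFinite _)
    _ ≤ ∑ e ∈ Finset.Icc 1 (d / 2), {x : F | x ^ p ^ e = x}.ncard :=
        Finset.set_ncard_biUnion_le _ _
    _ ≤ ∑ e ∈ Finset.Icc 1 (d / 2), p ^ e := by
        refine Finset.sum_le_sum fun e he ↦ ncard_setOf_pow_eq_self_le ?_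
        exact Nat.one_lt_pow (Nat.one_le_iff_ne_zero.mp (Finset.mem_Icc.mp he).1) hp.one_lt
    _ ≤ 2 * p ^ (d / 2) := Nat.sum_Icc_one_pow_le_two_mul_pow hp.two_le _

theorem ncard_setOf_exists_ne_top_mem_le_two_mul_sqrt :
    ({x : F | ∃ K : Subfield F, K ≠ ⊤ ∧ x ∈ K}.ncard : ℝ) ≤ 2 * √(Nat.card F) := by
  have : Fintype F := Fintype.ofFinite F
  obtain ⟨p, -, d, hp, hF⟩ := FiniteField.card' F
  rw [← Nat.card_eq_fintype_card] at hF
  have hsqrt : (p : ℝ) ^ (d / 2 : ℕ) ≤ √(Nat.card F) := by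
    rw [Real.le_sqrt (by positivity) (by positivity), hF, ← pow_mul]
    push_cast
    exact pow_le_pow_right₀ (mod_cast hp.one_le) (by omega)
  calc _ ≤ ((2 * p ^ (d / 2 : ℕ) : ℕ) : ℝ) := mod_cast ncard_setOf_exists_ne_top_mem_le hp hF
    _ ≤ 2 * √(Nat.card F) := by push_cast; gcongr

end FiniteField

theorem card_tuples_generating_proper_subfield_le_general
    (q : ℕ)
    (j m : ℕ)
    (F : Type*) [Field F] [Fintype F] (hF : Fintype.card F = q ^ j) :
    (Set.ncard {a : Fin m → F |
        Subfield.closure ({x : F | x ^ q = x} ∪ Set.range a) ≠ ⊤} : ℝ)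
      ≤ 2 ^ m * (q : ℝ) ^ (((j : ℝ) * (m : ℝ)) / 2) := by
  set S := {x : F | ∃ K : Subfield F, K ≠ ⊤ ∧ x ∈ K}
  have hsub : {a : Fin m → F | Subfield.closure ({x : F | x ^ q = x} ∪ Set.range a) ≠ ⊤} ⊆
      Set.univ.pi fun _ ↦ S :=
    fun a ha i _ ↦ ⟨_, ha, Subfield.subset_closure (Or.inr ⟨i, rfl⟩)⟩
  have hcard : Set.ncard (Set.univ.pi fun _ : Fin m ↦ S) = S.ncard ^ m := by
    simp [Set.ncard_univ_pi_const]
  have hS : (S.ncard : ℝ) ≤ 2 * √((q : ℝ) ^ j) := by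
    have := FiniteField.ncard_setOf_exists_ne_top_mem_le_two_mul_sqrt (F := F)
    rwa [Nat.card_eq_fintype_card, hF, Nat.cast_pow] at this
  have hsqrt : √((q : ℝ) ^ j) ^ m = (q : ℝ) ^ (((j : ℝ) * (m : ℝ)) / 2) := by
    rw [Real.sqrt_eq_rpow, ← Real.rpow_natCast _ j, ← Real.rpow_mul (by positivity),
      ← Real.rpow_mul_natCast (by positivity)]
    ring_nf
  calc _ ≤ (S.ncard : ℝ) ^ m := mod_cast hcard ▸ Set.ncard_le_ncard hsub (Set.toFinite _)
    _ ≤ (2 * √((q : ℝ) ^ j)) ^ m := by gcongr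
    _ = 2 ^ m * (q : ℝ) ^ (((j : ℝ) * (m : ℝ)) / 2) := by rw [mul_pow, hsqrt]

/-- Let `q` be a prime power and `j, m ≥ 1` integers.  In the finite field `F` with
`q ^ j` elements, the number of tuples `(a 1, …, a m) ∈ F^m` such that the subfield
generated over `F_q` (realized inside `F` as `{x | x ^ q = x}`) by `a 1, …, a m` is a
proper subfield of `F` is at most `2 ^ m * q ^ (j * m / 2)`. -/
theorem card_tuples_generating_proper_subfield_le
    (q : ℕ) (hq : ∃ p k : ℕ, p.Prime ∧ 0 < k ∧ q = p ^ k)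
    (j m : ℕ) (hj : 1 ≤ j) (hm : 1 ≤ m)
    (F : Type*) [Field F] [Fintype F] (hF : Fintype.card F = q ^ j) :
    (Set.ncard {a : Fin m → F |
        Subfield.closure ({x : F | x ^ q = x} ∪ Set.range a) ≠ ⊤} : ℝ)
      ≤ 2 ^ m * (q : ℝ) ^ (((j : ℝ) * (m : ℝ)) / 2) :=
  card_tuples_generating_proper_subfield_le_general q j m F hF
end
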